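/- arXiv:1803.01150 — 4 statements merged into one kernel-verified Lean document; each statement's English description precedes it below -/
import Mathlib

section
/- Let z₁, …, zₙ ∈ ℝ with |z_i| ≤ K for all i, let β, γ ∈ ℝ^p, and let Z_i ∈ ℝ^p with ‖Z_i‖_∞ ≤ K_Z componentwise. Define weights w_i(β) := Y_i e^{β^⊤ Z_i} / ∑_ℓ Y_ℓ e^{β^⊤ Z_ℓ}, where each Y_i ∈ {0,1} and at least one Y_i e^{β^⊤Z_i} > 0 and at least one Y_i e^{γ^⊤Z_i} > 0. Then ∑_{i=1}^n |w_i(β) − w_i(γ)| ≤ 2(e^{K_Z ‖β−γ‖₁} − 1). -/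
/-!
Write `a i = Y i * exp (β ⬝ Z i)` and `b i = Y i * exp (γ ⬝ Z i)`. By Hölder, the exponents
differ by at most `D = K_Z ‖β - γ‖₁`, so `|a i - b i| ≤ (exp D - 1) a i`.
Normalising costs a factor `2`:
`a / A - b / B = (a - b) / A + b (1 / A - 1 / B)`, and the second part sums to `|B - A| / A`,
which is again at most `∑ |a i - b i| / A`.
-/

open Finset

theorem abs_sum_mul_le_mul_sum_abs {ι : Type*} (s : Finset ι) {f g : ι → ℝ} {K : ℝ}
    (hg : ∀ j ∈ s, |g j| ≤ K) : |∑ j ∈ s, f j * g j| ≤ K * ∑ j ∈ s, |f j| := by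
  rw [mul_sum]
  refine (abs_sum_le_sum_abs _ _).trans (sum_le_sum fun j hj => ?_)
  rw [abs_mul, mul_comm K]
  exact mul_le_mul_of_nonneg_left (hg j hj) (abs_nonneg _)

namespace Real

theorem abs_exp_sub_one_le_exp_abs_sub_one (t : ℝ) : |exp t - 1| ≤ exp |t| - 1 := by
  rcases le_total 0 t with ht | ht
  · rw [abs_of_nonneg ht, abs_of_nonneg (sub_nonneg.2 (one_le_exp ht))]
  · rw [abs_of_nonpos ht, abs_of_nonpos (sub_nonpos.2 (exp_le_one_iff.2 ht))]
    linarith [add_one_le_exp t, add_one_le_exp (-t)]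

theorem abs_exp_sub_exp_le (x y : ℝ) : |exp x - exp y| ≤ exp x * (exp |x - y| - 1) := by
  have hfactor : exp y - exp x = exp x * (exp (y - x) - 1) := by
    rw [mul_sub, ← exp_add]; ring_nf
  rw [abs_sub_comm, hfactor, abs_mul, abs_of_pos (exp_pos x), abs_sub_comm x y]
  exact mul_le_mul_of_nonneg_left (abs_exp_sub_one_le_exp_abs_sub_one _) (exp_pos x).le

end Real

section Normalization

variable {ι : Type*} (s : Finset ι) {a b : ι → ℝ}

theorem sum_abs_div_sum_sub_div_sum_le (hb : ∀ i ∈ s, 0 ≤ b i)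
    (hA : 0 < ∑ i ∈ s, a i) (hB : 0 < ∑ i ∈ s, b i) :
    ∑ i ∈ s, |a i / ∑ k ∈ s, a k - b i / ∑ k ∈ s, b k| ≤
      2 * (∑ i ∈ s, |a i - b i|) / ∑ i ∈ s, a i := by
  set A := ∑ i ∈ s, a i
  set B := ∑ i ∈ s, b i
  set S := ∑ i ∈ s, |a i - b i|
  have hBA : |B - A| ≤ S := by
    rw [← sum_sub_distrib]
    exact (abs_sum_le_sum_abs _ _).trans_eq (sum_congr rfl fun i _ => abs_sub_comm _ _)
  have hpoint : ∀ i ∈ s,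
      |a i / A - b i / B| ≤ |a i - b i| / A + b i * (|B - A| / (A * B)) := by
    intro i hi
    have hsplit : a i / A - b i / B = (a i - b i) / A + b i * ((B - A) / (A * B)) := by
      field_simp; ring
    rw [hsplit]
    refine (abs_add_le _ _).trans (le_of_eq ?_)
    rw [abs_div, abs_of_pos hA, abs_mul, abs_of_nonneg (hb i hi), abs_div,
      abs_of_pos (mul_pos hA hB)]
  calc ∑ i ∈ s, |a i / A - b i / B|
      ≤ ∑ i ∈ s, (|a i - b i| / A + b i * (|B - A| / (A * B))) := sum_le_sum hpoint
    _ = S / A + |B - A| / A := by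
      rw [sum_add_distrib, ← sum_div, ← sum_mul]
      change S / A + B * (|B - A| / (A * B)) = _
      field_simp
    _ ≤ 2 * S / A := by
      rw [← add_div, mul_comm, mul_two]
      exact div_le_div_of_nonneg_right (by linarith) hA.le

theorem sum_abs_div_sum_sub_div_sum_le_of_abs_sub_le (hb : ∀ i ∈ s, 0 ≤ b i)
    (hA : 0 < ∑ i ∈ s, a i) (hB : 0 < ∑ i ∈ s, b i) {ε : ℝ}
    (hab : ∀ i ∈ s, |a i - b i| ≤ ε * a i) :
    ∑ i ∈ s, |a i / ∑ k ∈ s, a k - b i / ∑ k ∈ s, b k| ≤ 2 * ε := by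
  refine (sum_abs_div_sum_sub_div_sum_le s hb hA hB).trans ?_
  rw [mul_div_assoc]
  gcongr
  rw [div_le_iff₀ hA]
  have hS : ∑ i ∈ s, |a i - b i| ≤ ε * ∑ i ∈ s, a i := mul_sum s a ε ▸ sum_le_sum hab
  linarith

end Normalization

theorem sum_abs_weight_diff_le {n p : ℕ}
    (K_Z : ℝ) (Y : Fin n → ℝ) (Z : Fin n → Fin p → ℝ) (β γ : Fin p → ℝ)
    (hY : ∀ i, Y i = 0 ∨ Y i = 1)
    (hZ : ∀ i j, |Z i j| ≤ K_Z)
    (hβ : ∃ i, 0 < Y i * Real.exp (∑ j, β j * Z i j))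
    (hγ : ∃ i, 0 < Y i * Real.exp (∑ j, γ j * Z i j))
    (w : (Fin p → ℝ) → Fin n → ℝ)
    (hw : ∀ b i, w b i =
      Y i * Real.exp (∑ j, b j * Z i j) /
        ∑ l, Y l * Real.exp (∑ j, b j * Z l j)) :
    ∑ i, |w β i - w γ i| ≤
      2 * (Real.exp (K_Z * ∑ j, |β j - γ j|) - 1) := by
  have hY_nonneg : ∀ i, 0 ≤ Y i := fun i => by rcases hY i with h | h <;> simp [h]
  have hterm_nonneg : ∀ (b : Fin p → ℝ) i, 0 ≤ Y i * Real.exp (∑ j, b j * Z i j) :=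
    fun b i => mul_nonneg (hY_nonneg i) (Real.exp_pos _).le
  have hsum_pos : ∀ b : Fin p → ℝ, (∃ i, 0 < Y i * Real.exp (∑ j, b j * Z i j)) →
      0 < ∑ l, Y l * Real.exp (∑ j, b j * Z l j) := fun b ⟨i, hi⟩ =>
    sum_pos' (fun l _ => hterm_nonneg b l) ⟨i, mem_univ i, hi⟩
  simp only [hw]
  refine sum_abs_div_sum_sub_div_sum_le_of_abs_sub_le _ (fun i _ => hterm_nonneg γ i)
    (hsum_pos β hβ) (hsum_pos γ hγ) fun i _ => ?_
  have hexponent : |∑ j, β j * Z i j - ∑ j, γ j * Z i j| ≤ K_Z * ∑ j, |β j - γ j| := by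
    rw [← sum_sub_distrib]
    simp_rw [← sub_mul]
    exact abs_sum_mul_le_mul_sum_abs univ fun j _ => hZ i j
  rw [← mul_sub, abs_mul, abs_of_nonneg (hY_nonneg i), mul_left_comm _ (Y i)]
  refine mul_le_mul_of_nonneg_left ((Real.abs_exp_sub_exp_le _ _).trans ?_) (hY_nonneg i)
  rw [mul_comm]
  gcongr
end

section
/- Let Z_1, …, Z_n ∈ ℝ^p with ‖Z_i‖_∞ ≤ K_Z for all i, let Y_1, …, Y_n ∈ {0,1} with ∑_i Y_i ≥ 1, and for β ∈ ℝ^p define the weighted average Z̄(β) := ∑_i Z_i Y_i e^{β^⊤Z_i} / ∑_i Y_i e^{β^⊤Z_i}. Then for any β, γ ∈ ℝ^p, ‖Z̄(β) − Z̄(γ)‖_∞ ≤ 2 K_Z (e^{K_Z ‖β − γ‖₁} − 1). -/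
open Finset

/-! Tilting the weights by `exp (β ⬝ Z i)` instead of `exp (γ ⬝ Z i)` changes each weight by a
factor within `exp (± K_Z ‖β - γ‖₁)`, so every weight, and hence the total weight, moves by at
most `ε := exp (K_Z ‖β - γ‖₁) - 1` times its size. Writing
`A / B - A' / B' = (A - A') / B + A' (B' - B) / (B B')`, a weighted mean of numbers bounded by
`K_Z` then moves by at most `K_Z ε + K_Z ε`. -/

noncomputable def weightedMean {ι : Type*} [Fintype ι] (w x : ι → ℝ) : ℝ :=
  (∑ i, x i * w i) / ∑ i, w i

lemma abs_one_sub_exp_le (x : ℝ) : |1 - Real.exp x| ≤ Real.exp |x| - 1 := by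
  rcases le_or_gt 0 x with hx | hx
  · rw [abs_of_nonneg hx, abs_sub_comm, abs_of_nonneg (by linarith [Real.one_le_exp hx])]
  · rw [abs_of_neg hx, abs_of_nonneg (by linarith [Real.exp_lt_one_iff.mpr hx])]
    linarith [Real.add_one_le_exp x, Real.add_one_le_exp (-x)]

lemma abs_mul_exp_sub_mul_exp_le {c a b D : ℝ} (hc : 0 ≤ c) (hab : |a - b| ≤ D) :
    |c * Real.exp a - c * Real.exp b| ≤ (Real.exp D - 1) * (c * Real.exp a) := by
  have hfactor : c * Real.exp a - c * Real.exp b = c * Real.exp a * (1 - Real.exp (b - a)) := by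
    rw [Real.exp_sub]
    field_simp
  have hc' : 0 ≤ c * Real.exp a := mul_nonneg hc (Real.exp_pos a).le
  rw [hfactor, abs_mul, abs_of_nonneg hc', mul_comm]
  gcongr
  calc |1 - Real.exp (b - a)| ≤ Real.exp |b - a| - 1 := abs_one_sub_exp_le _
    _ ≤ Real.exp D - 1 := by rw [abs_sub_comm] at hab; gcongr

lemma abs_sum_mul_sub_sum_mul_le {ι : Type*} [Fintype ι] {K : ℝ} {z : ι → ℝ}
    (hz : ∀ j, |z j| ≤ K) (β γ : ι → ℝ) :
    |∑ j, β j * z j - ∑ j, γ j * z j| ≤ K * ∑ j, |β j - γ j| := by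
  rw [← sum_sub_distrib, mul_sum]
  refine (abs_sum_le_sum_abs _ _).trans (sum_le_sum fun j _ => ?_)
  rw [← sub_mul, abs_mul, mul_comm]
  exact mul_le_mul_of_nonneg_right (hz j) (abs_nonneg _)

lemma sum_mul_exp_pos {ι : Type*} [Fintype ι] {c : ι → ℝ} (hc : ∀ i, 0 ≤ c i)
    (hsum : 0 < ∑ i, c i) (a : ι → ℝ) : 0 < ∑ i, c i * Real.exp (a i) := by
  obtain ⟨i, -, hi⟩ := exists_lt_of_sum_lt (s := univ) (f := 0) (g := c) (by simpa using hsum)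
  exact sum_pos' (fun j _ => mul_nonneg (hc j) (Real.exp_pos _).le)
    ⟨i, mem_univ i, mul_pos hi (Real.exp_pos _)⟩

lemma abs_div_sub_div_le {A A' B B' α K ε : ℝ} (hB : 0 < B) (hB' : 0 < B')
    (hA : |A - A'| ≤ α * B) (hA' : |A'| ≤ K * B') (hBB' : |B - B'| ≤ ε * B) :
    |A / B - A' / B'| ≤ α + K * ε := by
  have hsplit : A / B - A' / B' = (A - A') / B - A' * (B - B') / (B' * B) := by
    field_simp
    ring
  have h₁ : |(A - A') / B| ≤ α := by
    rwa [abs_div, abs_of_pos hB, div_le_iff₀ hB]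
  have h₂ : |A' * (B - B') / (B' * B)| ≤ K * ε := by
    rw [abs_div, abs_of_pos (mul_pos hB' hB), div_le_iff₀ (mul_pos hB' hB), abs_mul]
    calc |A'| * |B - B'| ≤ (K * B') * (ε * B) :=
          mul_le_mul hA' hBB' (abs_nonneg _) ((abs_nonneg _).trans hA')
      _ = K * ε * (B' * B) := by ring
  rw [hsplit]
  exact (abs_sub _ _).trans (add_le_add h₁ h₂)

lemma abs_weightedMean_sub_weightedMean_le {ι : Type*} [Fintype ι] {w w' x : ι → ℝ} {K ε : ℝ}
    (hx : ∀ i, |x i| ≤ K) (hw' : ∀ i, 0 ≤ w' i) (hclose : ∀ i, |w i - w' i| ≤ ε * w i)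
    (hB : 0 < ∑ i, w i) (hB' : 0 < ∑ i, w' i) :
    |weightedMean w x - weightedMean w' x| ≤ 2 * K * ε := by
  have hA : |∑ i, x i * w i - ∑ i, x i * w' i| ≤ K * ε * ∑ i, w i := by
    rw [← sum_sub_distrib, mul_sum]
    refine (abs_sum_le_sum_abs _ _).trans (sum_le_sum fun i _ => ?_)
    rw [← mul_sub, abs_mul, mul_assoc]
    exact mul_le_mul (hx i) (hclose i) (abs_nonneg _) ((abs_nonneg _).trans (hx i))
  have hA' : |∑ i, x i * w' i| ≤ K * ∑ i, w' i := by
    rw [mul_sum]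
    refine (abs_sum_le_sum_abs _ _).trans (sum_le_sum fun i _ => ?_)
    rw [abs_mul, abs_of_nonneg (hw' i)]
    exact mul_le_mul_of_nonneg_right (hx i) (hw' i)
  have hBB' : |∑ i, w i - ∑ i, w' i| ≤ ε * ∑ i, w i := by
    rw [← sum_sub_distrib, mul_sum]
    exact (abs_sum_le_sum_abs _ _).trans (sum_le_sum fun i _ => hclose i)
  calc |weightedMean w x - weightedMean w' x| ≤ K * ε + K * ε :=
        abs_div_sub_div_le hB hB' hA hA' hBB'
    _ = 2 * K * ε := by ring

theorem weighted_avg_diff_le_general {n p : ℕ}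
    (K_Z : ℝ) (Y : Fin n → ℝ) (Z : Fin n → Fin p → ℝ)
    (β γ : Fin p → ℝ)
    (hY : ∀ i, Y i = 0 ∨ Y i = 1)
    (hY1 : 1 ≤ ∑ i, Y i)
    (hZ : ∀ i j, |Z i j| ≤ K_Z)
    (Zbar : (Fin p → ℝ) → Fin p → ℝ)
    (hZbar : ∀ b k, Zbar b k =
      (∑ i, Z i k * (Y i * Real.exp (∑ j, b j * Z i j))) /
        ∑ i, Y i * Real.exp (∑ j, b j * Z i j)) :
    ∀ k, |Zbar β k - Zbar γ k| ≤
      2 * K_Z * (Real.exp (K_Z * ∑ j, |β j - γ j|) - 1) := by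
  intro k
  have hY0 : ∀ i, 0 ≤ Y i := fun i => by rcases hY i with h | h <;> simp [h]
  have hpos : ∀ b : Fin p → ℝ, 0 < ∑ i, Y i * Real.exp (∑ j, b j * Z i j) :=
    fun b => sum_mul_exp_pos hY0 (by linarith) _
  rw [hZbar, hZbar]
  exact abs_weightedMean_sub_weightedMean_le (fun i => hZ i k)
    (fun i => mul_nonneg (hY0 i) (Real.exp_pos _).le)
    (fun i => abs_mul_exp_sub_mul_exp_le (hY0 i) (abs_sum_mul_sub_sum_mul_le (hZ i) β γ))
    (hpos β) (hpos γ)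

theorem weighted_avg_diff_le {n p : ℕ}
    (K_Z : ℝ) (hK : 0 < K_Z) (Y : Fin n → ℝ) (Z : Fin n → Fin p → ℝ)
    (β γ : Fin p → ℝ)
    (hY : ∀ i, Y i = 0 ∨ Y i = 1)
    (hY1 : 1 ≤ ∑ i, Y i)
    (hZ : ∀ i j, |Z i j| ≤ K_Z)
    (Zbar : (Fin p → ℝ) → Fin p → ℝ)
    (hZbar : ∀ b k, Zbar b k =
      (∑ i, Z i k * (Y i * Real.exp (∑ j, b j * Z i j))) /
        ∑ i, Y i * Real.exp (∑ j, b j * Z i j)) :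
    ∀ k, |Zbar β k - Zbar γ k| ≤
      2 * K_Z * (Real.exp (K_Z * ∑ j, |β j - γ j|) - 1) :=
  weighted_avg_diff_le_general K_Z Y Z β γ hY hY1 hZ Zbar hZbar
end

section
/- Let Σ̂ and Θ̂ be p×p real matrices, let Σ be an invertible symmetric p×p real matrix with Σ̂ symmetric, and suppose ‖Θ̂ Σ̂ − I‖_∞ ≤ λ and ‖Σ̂ Σ^{−1} − I‖_∞ ≤ λ and ‖Θ̂‖_{op,∞} ≤ ‖Σ^{−1}‖_{op,∞}. Then ‖Θ̂ − Σ^{−1}‖_∞ ≤ 2 λ ‖Σ^{−1}‖_{op,1}. -/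
open Finset

/-- Entrywise maximum absolute norm of a square matrix. -/
noncomputable def entryNorm {n : Type*} [Fintype n] [Nonempty n]
    (A : Matrix n n ℝ) : ℝ :=
  Finset.univ.sup' Finset.univ_nonempty fun p : n × n => |A p.1 p.2|

/-- Operator ℓ∞ norm: maximum row ℓ¹ norm. -/
noncomputable def opInfNorm {n : Type*} [Fintype n] [Nonempty n]
    (A : Matrix n n ℝ) : ℝ :=
  Finset.univ.sup' Finset.univ_nonempty fun i => ∑ j, |A i j|

/-- Operator ℓ¹ norm: maximum column ℓ¹ norm. -/
noncomputable def opOneNorm {n : Type*} [Fintype n] [Nonempty n]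
    (A : Matrix n n ℝ) : ℝ :=
  Finset.univ.sup' Finset.univ_nonempty fun j => ∑ i, |A i j|

theorem clime_precision_entrywise_bound {n : Type*} [Fintype n] [Nonempty n]
    [DecidableEq n]
    (Shat Θhat Sig : Matrix n n ℝ) (lam : ℝ)
    (hSsym : Sig.IsSymm) (hShatsym : Shat.IsSymm) (hSinv : IsUnit Sig.det)
    (h1 : entryNorm (Θhat * Shat - 1) ≤ lam)
    (h2 : entryNorm (Shat * Sig⁻¹ - 1) ≤ lam)
    (h3 : opInfNorm Θhat ≤ opInfNorm Sig⁻¹) :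
    entryNorm (Θhat - Sig⁻¹) ≤ 2 * lam * opOneNorm Sig⁻¹ := by
  have hSinvSym : (Sig⁻¹).IsSymm := by
    unfold Matrix.IsSymm at *
    rw [Matrix.transpose_nonsing_inv, hSsym]
  -- opInfNorm Sig⁻¹ = opOneNorm Sig⁻¹
  have hsymnorm : opInfNorm Sig⁻¹ = opOneNorm Sig⁻¹ := by
    unfold opInfNorm opOneNorm
    refine Finset.sup'_congr _ rfl fun i _ => ?_
    refine Finset.sum_congr rfl fun j _ => ?_
    rw [show Sig⁻¹ i j = Sig⁻¹ j i from by
      conv_lhs => rw [← hSinvSym]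
      rfl]
  have key : Θhat - Sig⁻¹ = Θhat * (1 - Shat * Sig⁻¹) + (Θhat * Shat - 1) * Sig⁻¹ := by
    noncomm_ring
  have entry_le : ∀ (A : Matrix n n ℝ) (i j : n), |A i j| ≤ entryNorm A :=
    fun A i j => Finset.le_sup' (f := fun p : n × n => |A p.1 p.2|) (Finset.mem_univ (i, j))
  have hlam : 0 ≤ lam := by
    obtain ⟨i⟩ := ‹Nonempty n›
    exact le_trans (le_trans (abs_nonneg _) (entry_le _ i i)) h1
  apply Finset.sup'_le
  rintro ⟨i, j⟩ -
  rw [key]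
  simp only [Matrix.add_apply, Matrix.mul_apply]
  calc |(∑ k, Θhat i k * (1 - Shat * Sig⁻¹) k j) + ∑ k, (Θhat * Shat - 1) i k * Sig⁻¹ k j|
      ≤ |∑ k, Θhat i k * (1 - Shat * Sig⁻¹) k j| + |∑ k, (Θhat * Shat - 1) i k * Sig⁻¹ k j| :=
        abs_add_le _ _
    _ ≤ (∑ k, |Θhat i k * (1 - Shat * Sig⁻¹) k j|) + ∑ k, |(Θhat * Shat - 1) i k * Sig⁻¹ k j| :=
        add_le_add (Finset.abs_sum_le_sum_abs _ _) (Finset.abs_sum_le_sum_abs _ _)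
    _ ≤ (∑ k, |Θhat i k| * lam) + ∑ k, lam * |Sig⁻¹ k j| := by
        refine add_le_add (Finset.sum_le_sum fun k _ => ?_) (Finset.sum_le_sum fun k _ => ?_)
        · rw [abs_mul]
          refine mul_le_mul_of_nonneg_left ?_ (abs_nonneg _)
          calc |(1 - Shat * Sig⁻¹) k j| = |(Shat * Sig⁻¹ - 1) k j| := by
                simp [Matrix.sub_apply, abs_sub_comm]
            _ ≤ lam := le_trans (entry_le _ k j) h2
        · rw [abs_mul]
          refine mul_le_mul_of_nonneg_right ?_ (abs_nonneg _)
          exact le_trans (entry_le _ i k) h1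
    _ = lam * (∑ k, |Θhat i k|) + lam * ∑ k, |Sig⁻¹ k j| := by
        rw [← Finset.sum_mul, ← Finset.mul_sum, mul_comm]
    _ ≤ lam * opOneNorm Sig⁻¹ + lam * opOneNorm Sig⁻¹ := by
        refine add_le_add (mul_le_mul_of_nonneg_left ?_ hlam)
          (mul_le_mul_of_nonneg_left ?_ hlam)
        · calc (∑ k, |Θhat i k|) ≤ opInfNorm Θhat :=
              Finset.le_sup' (f := fun i => ∑ j, |Θhat i j|) (Finset.mem_univ i)
            _ ≤ opInfNorm Sig⁻¹ := h3
            _ = opOneNorm Sig⁻¹ := hsymnorm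
        · exact Finset.le_sup' (f := fun j => ∑ i, |Sig⁻¹ i j|) (Finset.mem_univ j)
    _ = 2 * lam * opOneNorm Sig⁻¹ := by ring
end

section
/- Let Θ = (Θ₁,…,Θ_p)^⊤ ∈ ℝ^{p×p} be a symmetric matrix with rows Θ_j, and let Θ̌ = (Θ̌₁,…,Θ̌_p)^⊤ be another p×p matrix satisfying ‖Θ̌_j‖₁ ≤ ‖Θ_j‖₁ for all j = 1,…,p. Then ‖Θ̌ − Θ‖_{op,∞} ≤ 12 ‖Θ̌ − Θ‖_∞ · max_{j=1,…,p} #{i : Θ_{ij} ≠ 0}. -/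
open Finset

theorem row_l1_contraction_opInf_bound {n : Type*} [Fintype n] [Nonempty n]
    (Θ Θcheck : Matrix n n ℝ) (hsym : Θ.IsSymm)
    (hrow : ∀ j, (∑ i, |Θcheck j i|) ≤ ∑ i, |Θ j i|) :
    opInfNorm (Θcheck - Θ) ≤
      12 * entryNorm (Θcheck - Θ) *
        (Finset.univ.sup' Finset.univ_nonempty fun j =>
          ((Finset.univ.filter fun i => Θ i j ≠ 0).card : ℝ)) := by
  classical
  set Δ := Θcheck - Θ with hΔ
  have hΔapp : ∀ a b, Δ a b = Θcheck a b - Θ a b := fun a b => rfl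
  set M := entryNorm Δ with hMdef
  have hentry : ∀ a b, |Δ a b| ≤ M := fun a b =>
    Finset.le_sup' (fun p : n × n => |Δ p.1 p.2|) (Finset.mem_univ (a, b))
  obtain ⟨a0⟩ := ‹Nonempty n›
  have hM0 : 0 ≤ M := (abs_nonneg _).trans (hentry a0 a0)
  set C := (Finset.univ.sup' Finset.univ_nonempty fun j =>
      ((Finset.univ.filter fun i => Θ i j ≠ 0).card : ℝ)) with hCdef
  have hC0 : 0 ≤ C := le_trans (Nat.cast_nonneg _)
    (Finset.le_sup' (fun j => ((Finset.univ.filter fun i => Θ i j ≠ 0).card : ℝ))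
      (Finset.mem_univ a0))
  have key : ∀ j, (∑ i, |Δ j i|) ≤ 2 * M * C := by
    intro j
    set S := Finset.univ.filter (fun i => Θ j i ≠ 0) with hS
    have hScard : (S.card : ℝ) ≤ C := by
      have hSeq : S = Finset.univ.filter (fun i => Θ i j ≠ 0) := by
        ext i
        simp only [hS, Finset.mem_filter, Finset.mem_univ, true_and]
        rw [hsym.apply]
      rw [hSeq]
      exact Finset.le_sup' (fun j => ((Finset.univ.filter fun i => Θ i j ≠ 0).card : ℝ))
        (Finset.mem_univ j)
    have hzero : ∀ i ∉ S, Θ j i = 0 := by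
      intro i hi
      by_contra h
      exact hi (Finset.mem_filter.mpr ⟨Finset.mem_univ i, h⟩)
    have hsplit : (∑ i, |Δ j i|) = (∑ i ∈ S, |Δ j i|) + ∑ i ∈ Sᶜ, |Δ j i| :=
      (Finset.sum_add_sum_compl S _).symm
    have h1 : (∑ i ∈ S, |Δ j i|) ≤ S.card * M :=
      calc (∑ i ∈ S, |Δ j i|) ≤ ∑ _i ∈ S, M := Finset.sum_le_sum fun i _ => hentry j i
        _ = S.card * M := by rw [Finset.sum_const, nsmul_eq_mul]
    have h2 : (∑ i ∈ Sᶜ, |Δ j i|) ≤ S.card * M := by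
      have e1 : (∑ i ∈ Sᶜ, |Δ j i|) = ∑ i ∈ Sᶜ, |Θcheck j i| :=
        Finset.sum_congr rfl fun i hi => by
          rw [hΔapp, hzero i (Finset.mem_compl.mp hi), sub_zero]
      have e2 : (∑ i ∈ Sᶜ, |Θcheck j i|)
          = (∑ i, |Θcheck j i|) - ∑ i ∈ S, |Θcheck j i| := by
        rw [eq_sub_iff_add_eq, add_comm, Finset.sum_add_sum_compl]
      have e3 : (∑ i, |Θ j i|) = ∑ i ∈ S, |Θ j i| := by
        rw [← Finset.sum_add_sum_compl S (fun i => |Θ j i|)]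
        have hz : (∑ i ∈ Sᶜ, |Θ j i|) = 0 :=
          Finset.sum_eq_zero fun i hi => by
            rw [hzero i (Finset.mem_compl.mp hi), abs_zero]
        rw [hz, add_zero]
      calc (∑ i ∈ Sᶜ, |Δ j i|)
          = (∑ i, |Θcheck j i|) - ∑ i ∈ S, |Θcheck j i| := by rw [e1, e2]
        _ ≤ (∑ i, |Θ j i|) - ∑ i ∈ S, |Θcheck j i| := by linarith [hrow j]
        _ = ∑ i ∈ S, (|Θ j i| - |Θcheck j i|) := by
              rw [e3, Finset.sum_sub_distrib]
        _ ≤ ∑ i ∈ S, |Δ j i| := Finset.sum_le_sum fun i _ => by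
              rw [hΔapp]
              calc |Θ j i| - |Θcheck j i| ≤ |Θ j i - Θcheck j i| :=
                    abs_sub_abs_le_abs_sub _ _
                _ = |Θcheck j i - Θ j i| := abs_sub_comm _ _
        _ ≤ S.card * M := h1
    calc (∑ i, |Δ j i|) ≤ S.card * M + S.card * M := by
          rw [hsplit]; exact add_le_add h1 h2
      _ = 2 * M * S.card := by ring
      _ ≤ 2 * M * C := by
          apply mul_le_mul_of_nonneg_left hScard (by positivity)
  calc opInfNorm Δ ≤ 2 * M * C := Finset.sup'_le _ _ fun j _ => key j
    _ ≤ 12 * M * C := by nlinarith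
end
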